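/- arXiv:2509.14842 — 3 statements merged into one kernel-verified Lean document; each statement's English description precedes it below -/
import Mathlib

section
/- (Kusmin–Landau inequality) Let f : ℕ → ℝ, N ∈ ℕ, and θ ∈ ℝ satisfy 0 < θ ≤ Δf(1) ≤ Δf(2) ≤ … ≤ Δf(N-1) < 1 − θ, where Δf(n) := f(n+1) − f(n). Then |∑_{n=1}^{N} e(f(n))| ≤ cot(πθ/2). -/
open Finset

noncomputable def e (x : ℝ) : ℂ := Complex.exp (2 * Real.pi * Complex.I * x)

/-!
Write `u n = e (f n)` and `d n = Δf(n)`. Since `u (n + 1) = u n * e (d n)`, each term is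
`u n = (u n - u (n + 1)) * w n` with `w n = (1 - e (d n))⁻¹ = (1 + i cot (π d n)) / 2`.
Summation by parts bounds the sum by `‖w 0‖ + ∑ ‖w (n + 1) - w n‖ + ‖1 - w K‖`. The two boundary
terms are `1 / (2 sin (π d 0))` and `1 / (2 sin (π d K))`, and since the `d n` increase inside
`(0, 1)`, the middle sum telescopes to `(cot (π d 0) - cot (π d K)) / 2`. By the half-angle formula
the total is `(cot (π d 0 / 2) + cot (π (1 - d K) / 2)) / 2`, and both cotangents are at most
`cot (π θ / 2)`.
-/

open Real

namespace Real

lemma cot_eq_tan_pi_div_two_sub (x : ℝ) : cot x = tan (π / 2 - x) := by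
  rw [tan_pi_div_two_sub, tan_inv_eq_cot]

lemma cot_le_cot {x y : ℝ} (hx : 0 < x) (hxy : x ≤ y) (hy : y < π) : cot y ≤ cot x := by
  rw [cot_eq_tan_pi_div_two_sub, cot_eq_tan_pi_div_two_sub]
  exact strictMonoOn_tan.monotoneOn ⟨by linarith, by linarith⟩ ⟨by linarith, by linarith⟩
    (by linarith)

/-- Both sides vanish when `sin x = 0`, thanks to the convention `a / 0 = 0`. -/
lemma inv_sin_add_cot (x : ℝ) : (sin x)⁻¹ + cot x = cot (x / 2) := by
  have hsin : sin x = 2 * sin (x / 2) * cos (x / 2) := by rw [← sin_two_mul]; ring_nf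
  have hcos : cos x = 2 * cos (x / 2) ^ 2 - 1 := by rw [← cos_two_mul]; ring_nf
  rw [cot_eq_cos_div_sin, cot_eq_cos_div_sin, hsin, hcos]
  rcases eq_or_ne (sin (x / 2)) 0 with hs | hs
  · simp [hs]
  rcases eq_or_ne (cos (x / 2)) 0 with hc | hc
  · simp [hc]
  field_simp
  ring

lemma inv_sin_sub_cot (x : ℝ) : (sin x)⁻¹ - cot x = cot ((π - x) / 2) := by
  rw [← inv_sin_add_cot, sin_pi_sub, cot_eq_cos_div_sin, cot_eq_cos_div_sin, sin_pi_sub,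
    cos_pi_sub, neg_div, sub_eq_add_neg]

end Real

lemma Complex.inv_one_sub_exp_two_mul_I {z : ℂ} (hz : Complex.sin z ≠ 0) :
    (1 - Complex.exp (2 * z * Complex.I))⁻¹ = (1 + Complex.cot z * Complex.I) / 2 := by
  refine inv_eq_of_mul_eq_one_right ?_
  rw [Complex.exp_mul_I, Complex.cos_two_mul, Complex.sin_two_mul, Complex.cot_eq_cos_div_sin]
  field_simp
  linear_combination (-2 * Complex.cos z * Complex.I) * Complex.sin_sq_add_cos_sq z
    - 2 * Complex.cos z ^ 2 * Complex.sin z * Complex.I_sq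

lemma e_eq_exp (x : ℝ) : e x = Complex.exp (2 * (π * x : ℝ) * Complex.I) := by
  rw [e]; push_cast; ring_nf

lemma e_add (x y : ℝ) : e (x + y) = e x * e y := by
  rw [e, e, e, ← Complex.exp_add]; push_cast; ring_nf

lemma norm_e (x : ℝ) : ‖e x‖ = 1 := by
  rw [e_eq_exp, ← Complex.ofReal_ofNat, ← Complex.ofReal_mul, Complex.norm_exp_ofReal_mul_I]

lemma norm_one_sub_e (x : ℝ) : ‖1 - e x‖ = 2 * |sin (π * x)| := by
  rw [norm_sub_rev, e_eq_exp, mul_comm, ← Complex.ofReal_ofNat, ← Complex.ofReal_mul,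
    Complex.norm_exp_I_mul_ofReal_sub_one]
  simp

lemma inv_one_sub_e {x : ℝ} (hx : sin (π * x) ≠ 0) :
    (1 - e x)⁻¹ = (1 + (cot (π * x) : ℂ) * Complex.I) / 2 := by
  rw [e_eq_exp, Complex.inv_one_sub_exp_two_mul_I (by exact_mod_cast hx), Complex.ofReal_cot]

lemma norm_inv_one_sub_e {x : ℝ} (hx : 0 < sin (π * x)) : ‖(1 - e x)⁻¹‖ = (2 * sin (π * x))⁻¹ := by
  rw [norm_inv, norm_one_sub_e, abs_of_pos hx]

lemma norm_one_sub_inv_one_sub_e {x : ℝ} (hx : 0 < sin (π * x)) :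
    ‖1 - (1 - e x)⁻¹‖ = (2 * sin (π * x))⁻¹ := by
  have hconj : 1 - (1 - e x)⁻¹ = (starRingEnd ℂ) (1 - e x)⁻¹ := by
    rw [inv_one_sub_e hx.ne', map_div₀, map_add, map_mul, Complex.conj_ofReal, Complex.conj_I,
      map_one, map_ofNat]
    ring
  rw [hconj, Complex.norm_conj, norm_inv_one_sub_e hx]

lemma norm_inv_one_sub_e_sub {x y : ℝ} (hx : sin (π * x) ≠ 0) (hy : sin (π * y) ≠ 0) :
    ‖(1 - e x)⁻¹ - (1 - e y)⁻¹‖ = |cot (π * x) - cot (π * y)| / 2 := by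
  rw [inv_one_sub_e hx, inv_one_sub_e hy, ← sub_div, add_sub_add_left_eq_sub, ← sub_mul,
    norm_div, norm_mul, Complex.norm_I, mul_one, Complex.norm_two, ← Complex.ofReal_sub,
    Complex.norm_real, Real.norm_eq_abs]

open scoped fwdDiff

lemma sum_range_eq_of_eq_sub_mul {R : Type*} [CommRing R] {u w : ℕ → R} {K : ℕ}
    (h : ∀ n ≤ K, u n = (u n - u (n + 1)) * w n) :
    ∑ n ∈ range (K + 2), u n
      = u 0 * w 0 + ∑ n ∈ range K, u (n + 1) * (w (n + 1) - w n) + u (K + 1) * (1 - w K) := by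
  induction K with
  | zero =>
    simp only [zero_add, sum_range_succ, range_zero, sum_empty]
    linear_combination h 0 le_rfl
  | succ K ih =>
    rw [sum_range_succ, ih fun n hn ↦ h n (by omega), sum_range_succ]
    linear_combination h (K + 1) le_rfl

lemma norm_sum_range_le_of_eq_sub_mul {R : Type*} [SeminormedCommRing R] {u w : ℕ → R} {K : ℕ}
    (hu : ∀ n, ‖u n‖ ≤ 1) (h : ∀ n ≤ K, u n = (u n - u (n + 1)) * w n) :
    ‖∑ n ∈ range (K + 2), u n‖ ≤ ‖w 0‖ + ∑ n ∈ range K, ‖w (n + 1) - w n‖ + ‖1 - w K‖ := by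
  have hmul : ∀ n z, ‖u n * z‖ ≤ ‖z‖ := fun n z ↦
    (norm_mul_le _ _).trans (mul_le_of_le_one_left (norm_nonneg z) (hu n))
  rw [sum_range_eq_of_eq_sub_mul h]
  exact norm_add₃_le.trans <| add_le_add_three (hmul _ _)
    ((norm_sum_le _ _).trans (sum_le_sum fun n _ ↦ hmul _ _)) (hmul _ _)

theorem norm_sum_range_e_le_of_monotoneOn_fwdDiff (f : ℕ → ℝ) (K : ℕ)
    (hmono : MonotoneOn (Δ_[1] f) (Set.Iic K)) (h0 : 0 < Δ_[1] f 0) (hK : Δ_[1] f K < 1) :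
    ‖∑ n ∈ range (K + 2), e (f n)‖
      ≤ (cot (π * Δ_[1] f 0 / 2) + cot (π * (1 - Δ_[1] f K) / 2)) / 2 := by
  set d := Δ_[1] f
  have hd : ∀ n ≤ K, 0 < d n ∧ d n < 1 := fun n hn ↦
    ⟨h0.trans_le (hmono K.zero_le hn n.zero_le), (hmono hn Set.self_mem_Iic hn).trans_lt hK⟩
  have hsin : ∀ n ≤ K, 0 < sin (π * d n) := fun n hn ↦
    sin_pos_of_pos_of_lt_pi (by nlinarith [pi_pos, hd n hn]) (by nlinarith [pi_pos, hd n hn])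
  have hstep : ∀ n ≤ K, e (f n) = (e (f n) - e (f (n + 1))) * (1 - e (d n))⁻¹ := by
    intro n hn
    have hne : 1 - e (d n) ≠ 0 := by
      rw [← norm_ne_zero_iff, norm_one_sub_e]
      exact (mul_pos two_pos (abs_pos.2 (hsin n hn).ne')).ne'
    rw [show f (n + 1) = f n + d n by simp [d, fwdDiff], e_add, ← mul_one_sub, mul_assoc,
      mul_inv_cancel₀ hne, mul_one]
  have htel : ∑ n ∈ range K, ‖(1 - e (d (n + 1)))⁻¹ - (1 - e (d n))⁻¹‖
      = (cot (π * d 0) - cot (π * d K)) / 2 := by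
    rw [← sum_range_sub' (fun n ↦ cot (π * d n)), sum_div]
    refine sum_congr rfl fun n hn ↦ ?_
    have hnK : n < K := mem_range.1 hn
    rw [norm_inv_one_sub_e_sub (hsin _ hnK).ne' (hsin _ hnK.le).ne', abs_sub_comm,
      abs_of_nonneg (sub_nonneg.2 (cot_le_cot ?_ ?_ ?_))]
    · nlinarith [pi_pos, hd n hnK.le]
    · nlinarith [pi_pos, hmono hnK.le hnK (n.le_succ)]
    · nlinarith [pi_pos, hd (n + 1) hnK]
  calc _ ≤ _ := norm_sum_range_le_of_eq_sub_mul (fun n ↦ (norm_e _).le) hstep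
    _ = ((sin (π * d 0))⁻¹ + cot (π * d 0)) / 2 + ((sin (π * d K))⁻¹ - cot (π * d K)) / 2 := by
      rw [norm_inv_one_sub_e (hsin 0 K.zero_le), htel, norm_one_sub_inv_one_sub_e (hsin K le_rfl)]
      ring
    _ = _ := by rw [inv_sin_add_cot, inv_sin_sub_cot, mul_one_sub]; ring

/-- Kusmin–Landau inequality: if
`0 < θ ≤ Δf(1) ≤ Δf(2) ≤ … ≤ Δf(N-1) < 1 − θ`, where `Δf(n) = f(n+1) − f(n)`, then
`|∑_{n=1}^{N} e(f(n))| ≤ cot(πθ/2)`. -/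
theorem stmt_1 (f : ℕ → ℝ) (N : ℕ) (hN : 2 ≤ N) (θ : ℝ) (hθ : 0 < θ)
    (hlow : θ ≤ f 2 - f 1)
    (hmono : ∀ n, 1 ≤ n → n + 1 ≤ N - 1 → f (n + 1) - f n ≤ f (n + 2) - f (n + 1))
    (hhigh : f N - f (N - 1) < 1 - θ) :
    ‖∑ n ∈ Finset.Icc 1 N, e (f n)‖ ≤ Real.cot (Real.pi * θ / 2) := by
  obtain ⟨K, rfl⟩ : ∃ K, N = K + 2 := ⟨N - 2, by omega⟩
  set g := fun n ↦ f (n + 1)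
  have hmono' : MonotoneOn (Δ_[1] g) (Set.Iic K) :=
    monotoneOn_of_le_succ Set.ordConnected_Iic fun n _ _ hn ↦
      hmono (n + 1) (by omega) (by rw [Set.mem_Iic, Order.succ_eq_add_one] at hn; omega)
  have hlow' : θ ≤ Δ_[1] g 0 := hlow
  have hhigh' : Δ_[1] g K < 1 - θ := by simpa [g, fwdDiff] using hhigh
  have hsum : ∑ n ∈ Icc 1 (K + 2), e (f n) = ∑ n ∈ range (K + 2), e (g n) := by
    rw [← Ico_add_one_right_eq_Icc, sum_Ico_eq_sum_range, Nat.add_sub_cancel]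
    simp only [g, add_comm]
  have h0K := hmono' K.zero_le Set.self_mem_Iic K.zero_le
  have hcot0 : cot (π * Δ_[1] g 0 / 2) ≤ cot (π * θ / 2) :=
    cot_le_cot (by positivity) (by gcongr) (by nlinarith [pi_pos])
  have hcotK : cot (π * (1 - Δ_[1] g K) / 2) ≤ cot (π * θ / 2) :=
    cot_le_cot (by positivity) (by gcongr; linarith) (by nlinarith [pi_pos])
  rw [hsum]
  refine (norm_sum_range_e_le_of_monotoneOn_fwdDiff g K hmono' ?_ ?_).trans ?_ <;> linarith
end

section
/- For every α ∈ (0,1), all solutions of the difference equation x_{n+1} = xₙ + e(n^α) (n ≥ 1) over ℂ are unbounded. -/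
/-!
Since `n^α → ∞` while `(n+1)^α - n^α → 0`, for every `L` there are runs of `L` consecutive
indices `n ≥ 1` on which `n^α` stays within `1/6` of a fixed integer. Along such a run
`Re e(n^α) = cos (2π n^α) ≥ 1/2`, so `Re xₙ` increases by at least `L/2`, which is impossible
for a solution bounded by `C` once `L > 4C`.
-/

open Filter Topology

lemma rpow_add_one_sub_rpow_le {α t : ℝ} (hα0 : 0 ≤ α) (hα1 : α ≤ 1) (ht : 0 < t) :
    (t + 1) ^ α - t ^ α ≤ α * t ^ (α - 1) := by
  have hbern : (1 + t⁻¹) ^ α ≤ 1 + α * t⁻¹ :=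
    rpow_one_add_le_one_add_mul_self (by linarith [inv_pos.2 ht]) hα0 hα1
  calc (t + 1) ^ α - t ^ α = t ^ α * (1 + t⁻¹) ^ α - t ^ α := by
        rw [← Real.mul_rpow ht.le (by positivity), mul_add, mul_inv_cancel₀ ht.ne', mul_one]
    _ ≤ t ^ α * (1 + α * t⁻¹) - t ^ α := by gcongr
    _ = α * t ^ (α - 1) := by rw [Real.rpow_sub_one ht.ne']; ring

lemma tendsto_natCast_rpow_succ_sub_rpow {α : ℝ} (hα0 : 0 ≤ α) (hα1 : α < 1) :
    Tendsto (fun n : ℕ => ((n + 1 : ℕ) : ℝ) ^ α - (n : ℝ) ^ α) atTop (𝓝 0) := by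
  have hbound : Tendsto (fun n : ℕ => α * (n : ℝ) ^ (α - 1)) atTop (𝓝 0) := by
    have h := (tendsto_rpow_neg_atTop (by linarith : 0 < 1 - α)).comp
      tendsto_natCast_atTop_atTop
    simpa [Function.comp_def] using h.const_mul α
  refine tendsto_of_tendsto_of_tendsto_of_le_of_le' tendsto_const_nhds hbound ?_ ?_
  · refine Eventually.of_forall fun n => sub_nonneg.2 ?_
    exact Real.rpow_le_rpow (by positivity) (by push_cast; linarith) hα0
  · filter_upwards [eventually_gt_atTop 0] with n hn
    push_cast
    exact rpow_add_one_sub_rpow_le hα0 hα1.le (by exact_mod_cast hn)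

lemma abs_sub_le_mul_of_abs_succ_sub_le {f : ℕ → ℝ} {a : ℕ} {δ : ℝ}
    (h : ∀ n ≥ a, |f (n + 1) - f n| ≤ δ) (j : ℕ) : |f (a + j) - f a| ≤ j * δ := by
  induction j with
  | zero => simp
  | succ j ih =>
    calc |f (a + (j + 1)) - f a| ≤ |f (a + j + 1) - f (a + j)| + |f (a + j) - f a| :=
          abs_sub_le _ _ _
      _ ≤ δ + j * δ := add_le_add (h _ (Nat.le_add_right a j)) ih
      _ = (j + 1 : ℕ) * δ := by push_cast; ring

lemma exists_run_near_int {f : ℕ → ℝ} (hf : Tendsto f atTop atTop)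
    (hdf : Tendsto (fun n => f (n + 1) - f n) atTop (𝓝 0)) (L N : ℕ) {ε : ℝ} (hε : 0 < ε) :
    ∃ a ≥ N, ∃ K : ℤ, ∀ j ≤ L, |f (a + j) - K| ≤ ε := by
  classical
  set δ := ε / (L + 1)
  have hδ : 0 < δ := by positivity
  obtain ⟨N₁, hN₁⟩ := eventually_atTop.1 <| (Metric.tendsto_nhds.1 hdf δ hδ).mono
    fun n hn => by rw [Real.dist_0_eq_abs] at hn; exact hn.le
  set M := max N N₁
  set K : ℤ := ⌈f M⌉
  have hex : ∃ i, (K : ℝ) ≤ f (M + i) := by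
    simpa [Function.comp_def, add_comm] using
      ((hf.comp (tendsto_add_atTop_nat M)).eventually_ge_atTop (K : ℝ)).exists
  -- `M + Nat.find hex` is where `f` first reaches `K`; since `f M ≤ K`, it overshoots by at most `δ`.
  have hstart : |f (M + Nat.find hex) - K| ≤ δ := by
    have hge := Nat.find_spec hex
    rcases hi : Nat.find hex with _ | i
    · rw [hi, add_zero] at hge
      rw [add_zero, abs_le]
      constructor <;> linarith [Int.le_ceil (f M)]
    · have hlt : f (M + i) < K := not_le.1 (Nat.find_min hex (by omega))
      have hstep := hN₁ (M + i) (by omega)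
      rw [hi, ← add_assoc] at hge
      rw [← add_assoc, abs_le]
      rw [abs_le] at hstep
      constructor <;> linarith [hstep.2]
  refine ⟨M + Nat.find hex, by omega, K, fun j hj => ?_⟩
  have hrun := abs_sub_le_mul_of_abs_succ_sub_le (f := f) (a := M + Nat.find hex)
    (fun n hn => hN₁ n (by omega)) j
  have hjL : (j : ℝ) ≤ L := by exact_mod_cast hj
  calc |f (M + Nat.find hex + j) - K|
      ≤ |f (M + Nat.find hex + j) - f (M + Nat.find hex)| + |f (M + Nat.find hex) - K| :=
        abs_sub_le _ _ _
    _ ≤ j * δ + δ := add_le_add hrun hstart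
    _ ≤ (L + 1) * δ := by nlinarith
    _ = ε := by simp only [δ]; field_simp

lemma one_half_le_re_e_of_abs_sub_int_le {θ : ℝ} {K : ℤ} (h : |θ - K| ≤ 1 / 6) : 1 / 2 ≤ (e θ).re := by
  have hre : (e θ).re = Real.cos (2 * Real.pi * θ) := by
    rw [e, show (2 : ℂ) * Real.pi * Complex.I * θ = ((2 * Real.pi * θ : ℝ) : ℂ) * Complex.I by
      push_cast; ring, Complex.exp_ofReal_mul_I_re]
  have hshift : Real.cos (2 * Real.pi * θ) = Real.cos |2 * Real.pi * (θ - K)| := by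
    rw [Real.cos_abs, ← Real.cos_sub_int_mul_two_pi _ K]; ring_nf
  have hsmall : |2 * Real.pi * (θ - K)| ≤ Real.pi / 3 := by
    rw [abs_mul, abs_of_pos Real.two_pi_pos]
    nlinarith [Real.pi_pos]
  rw [hre, hshift, ← Real.cos_pi_div_three]
  exact Real.cos_le_cos_of_nonneg_of_le_pi (abs_nonneg _) (by linarith [Real.pi_pos]) hsmall

lemma mul_le_re_sub_of_le_re {x z : ℕ → ℂ} {a m : ℕ} {c : ℝ}
    (hx : ∀ j < m, x (a + j + 1) = x (a + j) + z (a + j)) (hz : ∀ j < m, c ≤ (z (a + j)).re) :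
    m * c ≤ (x (a + m) - x a).re := by
  induction m with
  | zero => simp
  | succ m ih =>
    have hstep := hx m m.lt_succ_self
    have hprev := ih (fun j hj => hx j (by omega)) (fun j hj => hz j (by omega))
    rw [← add_assoc, hstep]
    simp only [Complex.sub_re, Complex.add_re] at hprev ⊢
    push_cast
    linarith [hz m m.lt_succ_self]

/-- for every `α ∈ (0,1)`, all solutions of
`x_{n+1} = xₙ + e(n^α)` (n ≥ 1) are unbounded. -/
theorem stmt_14 (α : ℝ) (hα0 : 0 < α) (hα1 : α < 1) :
    ∀ x : ℕ → ℂ, (∀ n, 1 ≤ n → x (n + 1) = x n + e ((n : ℝ) ^ α)) →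
      ¬ ∃ C : ℝ, ∀ n, 1 ≤ n → ‖x n‖ ≤ C := by
  rintro x hx ⟨C, hC⟩
  obtain ⟨L, hL⟩ := exists_nat_gt (4 * C)
  have hf : Tendsto (fun n : ℕ => (n : ℝ) ^ α) atTop atTop :=
    (tendsto_rpow_atTop hα0).comp tendsto_natCast_atTop_atTop
  obtain ⟨a, ha, K, hK⟩ := exists_run_near_int hf (tendsto_natCast_rpow_succ_sub_rpow hα0.le hα1)
    L 1 (by norm_num : (0 : ℝ) < 1 / 6)
  have hdrift : L * (1 / 2) ≤ (x (a + L) - x a).re :=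
    mul_le_re_sub_of_le_re (z := fun n => e ((n : ℝ) ^ α)) (fun j _ => hx (a + j) (by omega))
      (fun j hj => one_half_le_re_e_of_abs_sub_int_le (hK j hj.le))
  have hre : ∀ n, 1 ≤ n → |(x n).re| ≤ C := fun n hn => (Complex.abs_re_le_norm _).trans (hC n hn)
  have hstart := abs_le.1 (hre a ha)
  have hend := abs_le.1 (hre (a + L) (by omega))
  rw [Complex.sub_re] at hdrift
  linarith [hstart.1, hend.2]
end

section
/- Let M ≥ 1, λ ∈ ℂ, and let J_λ be the M×M Jordan cell with eigenvalue λ (entries λ on the diagonal, 1 on the superdiagonal, 0 elsewhere). Let {x(n)}_{n≥1} ⊂ ℂ^M be the solution of x(n+1) = J_λ x(n) + y(n) (n ≥ 1) with given initial value x(1) and given sequence {y(n)}_{n≥1} ⊂ ℂ^M. Then for every 1 ≤ m ≤ M and every n ≥ 1, the m-th coordinate satisfies x_m(n) = ∑_{i=0}^{M−m} C(n−1, i) λ^{n−1−i} [ x_{i+m}(1) + ∑_{r=0}^{M−(i+m)} (−1)^r ∑_{k=1}^{n−1} ( (k)^{[r]} / r! ) · λ^{−k−r} · y_{r+i+m}(k)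 ], provided λ ≠ 0. -/
/-!
Write `J_λ = λ • 1 + N` with `N = jordanCell M 0` the shift: `N ^ M = 0` and
`(N ^ i *ᵥ v) m = v (m + i)`. Variation of constants gives
`x n = J_λ ^ (n - 1) *ᵥ (x 1 + ∑ k, J_λ ^ (-k) *ᵥ y k)`, and both powers are finite
sums in `N`: `J_λ ^ (n - 1)` by the binomial theorem, and
`J_λ ^ (-k) = λ ^ (-k) (1 + N / λ) ^ (-k) = ∑ r, (-1) ^ r multichoose k r λ ^ (-k - r) N ^ r`,
which inverts `J_λ ^ k` because `multichoose` satisfies Pascal's rule. Since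
`(k)^{[r]} / r! = multichoose k r`, the `m`-th coordinate is the stated formula.
-/

open Finset
open scoped Matrix

def jordanCell (M : ℕ) (lam : ℂ) : Matrix (Fin M) (Fin M) ℂ :=
  fun i j => if (j : ℕ) = (i : ℕ) then lam else if (j : ℕ) = (i : ℕ) + 1 then 1 else 0

section Nilpotent

variable {R : Type*} [Ring R] {u : R} {M : ℕ}

theorem one_add_mul_sum_multichoose_succ (hu : u ^ M = 0) (k : ℕ) :
    (1 + u) * ∑ r ∈ range M, ((-1) ^ r * (k + 1).multichoose r : ℤ) • u ^ r =
      ∑ r ∈ range M, ((-1) ^ r * k.multichoose r : ℤ) • u ^ r := by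
  rcases M with _ | M
  · simp
  have hshift : u * ∑ r ∈ range (M + 1), ((-1) ^ r * (k + 1).multichoose r : ℤ) • u ^ r =
      ∑ r ∈ range M, ((-1) ^ r * (k + 1).multichoose r : ℤ) • u ^ (r + 1) := by
    simp only [mul_sum, mul_smul_comm, ← pow_succ']
    rw [sum_range_succ, hu, smul_zero, add_zero]
  rw [add_mul, one_mul, hshift, sum_range_succ', sum_range_succ' _ M, add_right_comm,
    ← sum_add_distrib]
  congr 1
  · refine sum_congr rfl fun r _ => ?_
    rw [← add_smul, Nat.multichoose_succ_succ]
    congr 1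
    push_cast
    ring
  · simp [Nat.multichoose_zero_right]

theorem one_add_pow_mul_sum_multichoose (hu : u ^ M = 0) (k : ℕ) :
    (1 + u) ^ k * ∑ r ∈ range M, ((-1) ^ r * k.multichoose r : ℤ) • u ^ r = 1 := by
  induction k with
  | zero =>
    rcases M with _ | M
    · exact (subsingleton_of_zero_eq_one (by simpa using hu.symm)).elim _ _
    simp [sum_range_succ', Nat.multichoose_zero_succ, Nat.multichoose_zero_right]
  | succ k ih => rw [pow_succ, mul_assoc, one_add_mul_sum_multichoose_succ hu, ih]

end Nilpotent

section ScalarPlusNilpotent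

variable {K A : Type*} [Field K] [Ring A] [Algebra K A] {N : A} {M : ℕ}

theorem smul_one_add_pow_eq_sum (lam : K) (hN : N ^ M = 0) (p : ℕ) :
    (lam • 1 + N) ^ p = ∑ i ∈ range M, ((p.choose i : K) * lam ^ ((p : ℤ) - i)) • N ^ i := by
  have hterm : ∀ i ∈ range (p + 1), N ^ i * (lam • (1 : A)) ^ (p - i) * (p.choose i : A) =
      ((p.choose i : K) * lam ^ ((p : ℤ) - i)) • N ^ i := by
    intro i hi
    have hip : i ≤ p := Nat.lt_succ_iff.1 (mem_range.1 hi)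
    rw [show (p : ℤ) - i = ((p - i : ℕ) : ℤ) by omega, zpow_natCast, smul_pow, one_pow,
      mul_smul_comm, mul_one, ← nsmul_eq_mul', ← Nat.cast_smul_eq_nsmul K, smul_smul]
  have hchoose : ∀ i ∈ range (max (p + 1) M), i ∉ range (p + 1) →
      ((p.choose i : K) * lam ^ ((p : ℤ) - i)) • N ^ i = 0 := by
    intro i _ hi
    rw [Nat.choose_eq_zero_of_lt (by simpa using hi), Nat.cast_zero, zero_mul, zero_smul]
  have hnil : ∀ i ∈ range (max (p + 1) M), i ∉ range M →
      ((p.choose i : K) * lam ^ ((p : ℤ) - i)) • N ^ i = 0 := by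
    intro i _ hi
    rw [pow_eq_zero_of_le (by simpa using hi) hN, smul_zero]
  rw [add_comm, (Commute.smul_right (Commute.one_right N) lam).add_pow, sum_congr rfl hterm,
    sum_subset (range_subset_range.2 (le_max_left _ _)) hchoose,
    sum_subset (range_subset_range.2 (le_max_right _ _)) hnil]

theorem smul_one_add_pow_mul_sum_multichoose {lam : K} (hlam : lam ≠ 0) (hN : N ^ M = 0)
    (k : ℕ) :
    (lam • 1 + N) ^ k *
      ∑ r ∈ range M, ((-1) ^ r * k.multichoose r * lam ^ (-(k : ℤ) - r)) • N ^ r = 1 := by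
  set u := lam⁻¹ • N
  have hu : u ^ M = 0 := by rw [smul_pow, hN, smul_zero]
  have hJ : lam • 1 + N = lam • (1 + u) := by
    rw [smul_add, smul_smul, mul_inv_cancel₀ hlam, one_smul]
  have hB : ∑ r ∈ range M, ((-1) ^ r * k.multichoose r * lam ^ (-(k : ℤ) - r)) • N ^ r =
      lam ^ (-(k : ℤ)) • ∑ r ∈ range M, ((-1) ^ r * k.multichoose r : ℤ) • u ^ r := by
    rw [smul_sum]
    refine sum_congr rfl fun r _ => ?_
    rw [smul_pow, ← Int.cast_smul_eq_zsmul K, smul_smul, smul_smul, zpow_sub₀ hlam,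
      zpow_natCast, inv_pow]
    congr 1
    push_cast
    ring
  rw [hJ, hB, smul_pow, smul_mul_smul_comm, ← zpow_natCast, ← zpow_add₀ hlam, add_neg_cancel,
    zpow_zero, one_smul, one_add_pow_mul_sum_multichoose hu]

end ScalarPlusNilpotent

theorem prod_range_natCast_add_div_factorial {K : Type*} [Field K] [CharZero K] (k r : ℕ) :
    (∏ j ∈ range r, ((k : K) + j)) / r.factorial = k.multichoose r := by
  rw [div_eq_iff (Nat.cast_ne_zero.2 r.factorial_ne_zero), ← Nat.cast_mul, mul_comm,
    Nat.multichoose_eq, ← Nat.ascFactorial_eq_factorial_mul_choose',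
    Nat.ascFactorial_eq_prod_range]
  push_cast
  rfl

theorem eq_pow_mulVec_add_sum_pow_mulVec {ι R : Type*} [Fintype ι] [DecidableEq ι]
    [CommSemiring R] (A : Matrix ι ι R) {x y : ℕ → ι → R}
    (h : ∀ n, 1 ≤ n → x (n + 1) = A *ᵥ x n + y n) (p : ℕ) :
    x (p + 1) = A ^ p *ᵥ x 1 + ∑ k ∈ Icc 1 p, A ^ (p - k) *ᵥ y k := by
  induction p with
  | zero => simp
  | succ p ih =>
    have hpow : ∀ k ∈ Icc 1 p, (A * A ^ (p - k)) *ᵥ y k = A ^ (p + 1 - k) *ᵥ y k :=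
      fun k hk => by rw [← pow_succ', Nat.sub_add_comm (mem_Icc.1 hk).2]
    rw [h (p + 1) (by omega), ih, Matrix.mulVec_add, Matrix.mulVec_mulVec, ← pow_succ',
      Matrix.mulVec_sum, sum_Icc_succ_top (by omega), Nat.sub_self, pow_zero,
      Matrix.one_mulVec, add_assoc]
    simp only [Matrix.mulVec_mulVec]
    rw [sum_congr rfl hpow]

namespace jordanCell

theorem eq_smul_one_add (M : ℕ) (lam : ℂ) : jordanCell M lam = lam • 1 + jordanCell M 0 := by
  ext i j
  simp only [jordanCell, Matrix.add_apply, Matrix.smul_apply, Matrix.one_apply, Fin.ext_iff,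
    smul_eq_mul]
  split_ifs <;> first | rfl | omega | simp

theorem zero_mulVec_apply {M : ℕ} (v : Fin M → ℂ) (m : Fin M) :
    (jordanCell M 0 *ᵥ v) m = if h : (m : ℕ) + 1 < M then v ⟨m + 1, h⟩ else 0 := by
  have hentry : ∀ j : Fin M, jordanCell M 0 m j = if (j : ℕ) = m + 1 then 1 else 0 := by
    intro j
    simp only [jordanCell]
    split_ifs <;> first | rfl | omega
  simp only [Matrix.mulVec, dotProduct, hentry, ite_mul, one_mul, zero_mul]
  split_ifs with h
  · have hiff : ∀ j : Fin M, (j : ℕ) = m + 1 ↔ j = ⟨m + 1, h⟩ := fun j => by simp [Fin.ext_iff]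
    simp only [hiff, sum_ite_eq', mem_univ, if_true]
  · exact sum_eq_zero fun j _ => if_neg fun (hj : (j : ℕ) = m + 1) => h (hj ▸ j.isLt)

theorem zero_pow_mulVec_apply {M : ℕ} (i : ℕ) (v : Fin M → ℂ) (m : Fin M) :
    (jordanCell M 0 ^ i *ᵥ v) m = if h : (m : ℕ) + i < M then v ⟨m + i, h⟩ else 0 := by
  induction i generalizing v with
  | zero => simp
  | succ i ih =>
    rw [pow_succ, ← Matrix.mulVec_mulVec, ih]
    split_ifs with h₁ h₂ h₂
    · rw [zero_mulVec_apply, dif_pos (by simpa [add_assoc] using h₂)]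
      simp only [add_assoc]
    · rw [zero_mulVec_apply, dif_neg (by simpa [add_assoc] using h₂)]
    · omega
    · rfl

theorem zero_pow_self (M : ℕ) : jordanCell M 0 ^ M = 0 := by
  ext i j
  have h := zero_pow_mulVec_apply M (Pi.single j 1) i
  rwa [Matrix.mulVec_single_one, dif_neg (by omega)] at h

theorem sum_smul_zero_pow_mulVec_apply {M : ℕ} (c : ℕ → ℂ) (v : Fin M → ℂ) (m : Fin M) :
    ((∑ i ∈ range M, c i • jordanCell M 0 ^ i) *ᵥ v) m =
      ∑ i ∈ (range (M - m)).attach,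
        c i * v ⟨m + i, Nat.add_lt_of_lt_sub' (mem_range.1 i.2)⟩ := by
  simp only [Matrix.sum_mulVec, Matrix.smul_mulVec, Finset.sum_apply, Pi.smul_apply, smul_eq_mul,
    zero_pow_mulVec_apply]
  rw [← sum_subset (range_subset_range.2 (Nat.sub_le M m)) fun i _ hi => by
      rw [dif_neg (by simpa [Nat.lt_sub_iff_add_lt'] using hi), mul_zero], ← sum_attach]
  exact sum_congr rfl fun i _ => by rw [dif_pos]

end jordanCell

/-- Coordinates are indexed by `Fin M`, so `m : Fin M` is the paper's coordinate `m + 1`;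
powers of `λ` with possibly negative exponents are `zpow`s. -/
theorem stmt_18 (M : ℕ) (lam : ℂ) (hlam : lam ≠ 0)
    (x y : ℕ → Fin M → ℂ)
    (hrec : ∀ n, 1 ≤ n → x (n + 1) = (jordanCell M lam).mulVec (x n) + y n) :
    ∀ m : Fin M, ∀ n, 1 ≤ n →
      x n m =
        ∑ i ∈ (Finset.range (M - (m : ℕ))).attach,
          ((n - 1).choose i.1 : ℂ) * lam ^ ((n : ℤ) - 1 - (i.1 : ℤ)) *
            (x 1 ⟨(m : ℕ) + i.1, by
                have := Finset.mem_range.mp i.2; omega⟩ +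
              ∑ r ∈ (Finset.range (M - ((m : ℕ) + i.1))).attach,
                (-1 : ℂ) ^ r.1 *
                  ∑ k ∈ Finset.Icc 1 (n - 1),
                    ((∏ j ∈ Finset.range r.1, ((k : ℂ) + (j : ℂ))) / (r.1.factorial : ℂ)) *
                      lam ^ (-(k : ℤ) - (r.1 : ℤ)) *
                      y k ⟨(m : ℕ) + i.1 + r.1, by
                        have h1 := Finset.mem_range.mp i.2
                        have h2 := Finset.mem_range.mp r.2; omega⟩) := by
  intro m n hn
  obtain ⟨p, rfl⟩ := Nat.exists_eq_add_of_le' hn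
  have hN := jordanCell.zero_pow_self M
  rw [jordanCell.eq_smul_one_add] at hrec
  set J := lam • 1 + jordanCell M 0
  set B : ℕ → Matrix (Fin M) (Fin M) ℂ := fun k =>
    ∑ r ∈ range M, ((-1) ^ r * k.multichoose r * lam ^ (-(k : ℤ) - r)) • jordanCell M 0 ^ r
  have hpow : ∀ k ∈ Icc 1 p, J ^ (p - k) *ᵥ y k = J ^ p *ᵥ (B k *ᵥ y k) := fun k hk => by
    rw [Matrix.mulVec_mulVec, ← mul_one (J ^ (p - k)),
      ← smul_one_add_pow_mul_sum_multichoose hlam hN k, ← mul_assoc, ← pow_add,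
      Nat.sub_add_cancel (mem_Icc.1 hk).2]
  rw [eq_pow_mulVec_add_sum_pow_mulVec J hrec p, sum_congr rfl hpow, ← Matrix.mulVec_sum,
    ← Matrix.mulVec_add, smul_one_add_pow_eq_sum lam hN,
    jordanCell.sum_smul_zero_pow_mulVec_apply]
  simp only [Nat.add_sub_cancel, Nat.cast_add, Nat.cast_one, add_sub_cancel_right]
  refine sum_congr rfl fun i _ => ?_
  rw [Pi.add_apply, Finset.sum_apply]
  simp only [B, jordanCell.sum_smul_zero_pow_mulVec_apply, prod_range_natCast_add_div_factorial]
  rw [sum_comm]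
  refine congrArg _ (congrArg _ (sum_congr rfl fun r _ => ?_))
  rw [mul_sum]
  exact sum_congr rfl fun k _ => by ring
end
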